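/- arXiv:1907.03875 — 4 statements merged into one kernel-verified Lean document; each statement's English description precedes it below -/
import Mathlib

section
/- For every η > 0, the family 𝒯_η = {𝒳} if ε_I < η for all I ∈ 𝕋, and otherwise 𝒯_η = {I ∈ 𝕋 : ∃ J ∈ 𝕋 with J ⊆ I and ε_J ≥ η}, is a finite subtree of 𝕋 (it is closed under taking parents and has finitely many cells). -/
open MeasureTheory Set ProbabilityTheory
open scoped BigOperators ENNReal NNReal

attribute [local instance] Classical.propDecidable

noncomputable section

/-- Euclidean space `ℝ^D`. -/
abbrev Euc (D : ℕ) : Type := EuclideanSpace ℝ (Fin D)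

/-- A partition tree on a subset `X` of `ℝ^D`, with branching number at most `a`.
Cells are abstract nodes; `cset I` is the subset of `ℝ^D` associated with the cell `I`,
`depth I` its depth, `parent I` its parent. -/
structure PartitionTree (D : ℕ) (X : Set (Euc D)) (a : ℕ) : Type 1 where
  Cell : Type
  cellCountable : Countable Cell
  cset : Cell → Set (Euc D)
  depth : Cell → ℕ
  parent : Cell → Cell
  root : Cell
  root_cset : cset root = X
  depth_root : depth root = 0
  parent_root : parent root = root
  eq_root_of_depth_eq_zero : ∀ I, depth I = 0 → I = root
  depth_parent : ∀ I, I ≠ root → depth (parent I) + 1 = depth I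
  level_finite : ∀ j : ℕ, {I | depth I = j}.Finite
  level_cover : ∀ j : ℕ, ⋃ I ∈ {I | depth I = j}, cset I = X
  level_disjoint : ∀ I J, depth I = depth J → I ≠ J → Disjoint (cset I) (cset J)
  cset_measurable : ∀ I, MeasurableSet (cset I)
  cset_eq_iUnion_children : ∀ I, cset I = ⋃ J ∈ {J | parent J = I ∧ J ≠ root}, cset J
  ncard_children_le : ∀ I, {J | parent J = I ∧ J ≠ root}.ncard ≤ a

namespace PartitionTree

variable {D : ℕ} {X : Set (Euc D)} {a : ℕ} (T : PartitionTree D X a)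

/-- The children of a cell. -/
def children (I : T.Cell) : Set T.Cell := {J | T.parent J = I ∧ J ≠ T.root}

/-- `descend k I` is the set `𝒞^k(I)` of `k`-th generation descendants of `I`. -/
def descend : ℕ → T.Cell → Set T.Cell
  | 0, I => {I}
  | k + 1, I => ⋃ J ∈ descend k I, T.children J

/-- A subtree: a family of cells containing the parent of each of its cells. -/
def IsSubtree (S : Set T.Cell) : Prop := ∀ I ∈ S, T.parent I ∈ S

/-- The outer leaves `Λ(𝒯)` of a subtree `𝒯`. -/
def outerLeaves (S : Set T.Cell) : Set T.Cell := {I | I ∉ S ∧ T.parent I ∈ S}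

end PartitionTree

/-- The essential diameter of a set `I` with respect to the measure `ρ`:
`ediam ρ I = inf { diam (I \ J) | J ⊆ I Borel, ρ J = 0 }`. -/
def ediam {D : ℕ} (ρ : Measure (Euc D)) (I : Set (Euc D)) : ℝ :=
  ⨅ J : {J : Set (Euc D) // MeasurableSet J ∧ J ⊆ I ∧ ρ J = 0},
    Metric.diam (I \ (J : Set (Euc D)))

namespace PartitionTree

variable {D : ℕ} {X : Set (Euc D)} {a : ℕ} (T : PartitionTree D X a)
  (ρ : Measure (Euc D)) (xstar : T.Cell → Euc D)

/-- The (population) center of mass `c_I` of a cell: `ρ(I)⁻¹ ∫_I x dρ(x)` if `ρ(I) > 0`,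
and the arbitrary fixed point `xstar I` otherwise. -/
def center (I : T.Cell) : Euc D :=
  if ρ (T.cset I) ≠ 0 then (ρ (T.cset I)).toReal⁻¹ • ∫ x in T.cset I, x ∂ρ else xstar I

/-- The local expected distortion `ℰ_I = ∫_I ‖x - c_I‖² dρ(x)`. -/
def cellErr (I : T.Cell) : ℝ := ∫ x in T.cset I, ‖x - T.center ρ xstar I‖ ^ 2 ∂ρ

/-- `ε_I² = ℰ_I - ∑_{J ∈ 𝒞(I)} ℰ_J`. -/
def epsSq (I : T.Cell) : ℝ :=
  T.cellErr ρ xstar I - ∑ᶠ J ∈ T.children I, T.cellErr ρ xstar J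

/-- `ε_I ≥ 0`, defined by `ε_I² = ℰ_I - ∑_{J ∈ 𝒞(I)} ℰ_J`. -/
def eps (I : T.Cell) : ℝ := Real.sqrt (T.epsSq ρ xstar I)

/-- The subtree `𝒯_η`. -/
def Teta (η : ℝ) : Set T.Cell :=
  if ∀ I, T.eps ρ xstar I < η then {T.root}
  else {I | ∃ k, ∃ J ∈ T.descend k I, η ≤ T.eps ρ xstar J}

/-- The nonlinear projection `P_Λ(x) = ∑_{I ∈ Λ} c_I 1_I(x)` associated with a family of
cells `Λ` and code vectors `c`. -/
def proj (c : T.Cell → Euc D) (Λ : Set T.Cell) (x : Euc D) : Euc D :=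
  ∑ᶠ I ∈ Λ, (T.cset I).indicator (fun _ => c I) x

variable {n : ℕ}

/-- The number `n_I` of sample points lying in the cell `I`. -/
def empCount (x : Fin n → Euc D) (I : T.Cell) : ℕ := {i | x i ∈ T.cset I}.ncard

/-- The empirical center of mass `ĉ_I` of a cell: the average of the sample points lying in
`I` if there are any, and the arbitrary fixed point `xhat I` otherwise. -/
def empCenter (xhat : T.Cell → Euc D) (x : Fin n → Euc D) (I : T.Cell) : Euc D :=
  if T.empCount x I ≠ 0 then
    ((T.empCount x I : ℝ))⁻¹ • ∑ᶠ i ∈ {i : Fin n | x i ∈ T.cset I}, x i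
  else xhat I

/-- The empirical local distortion `Ê_I = n⁻¹ ∑_{i : X_i ∈ I} ‖X_i - ĉ_I‖²`. -/
def empErr (xhat : T.Cell → Euc D) (x : Fin n → Euc D) (I : T.Cell) : ℝ :=
  (n : ℝ)⁻¹ * ∑ᶠ i ∈ {i : Fin n | x i ∈ T.cset I}, ‖x i - T.empCenter xhat x I‖ ^ 2

/-- `ε̂_I² = Ê_I - ∑_{J ∈ 𝒞(I)} Ê_J`. -/
def empEpsSq (xhat : T.Cell → Euc D) (x : Fin n → Euc D) (I : T.Cell) : ℝ :=
  T.empErr xhat x I - ∑ᶠ J ∈ T.children I, T.empErr xhat x J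

/-- `ε̂_I ≥ 0`, defined by `ε̂_I² = Ê_I - ∑_{J ∈ 𝒞(I)} Ê_J`. -/
def empEps (xhat : T.Cell → Euc D) (x : Fin n → Euc D) (I : T.Cell) : ℝ :=
  Real.sqrt (T.empEpsSq xhat x I)

/-- The empirical subtree `T̂_η`, truncated at depth `jn`. -/
def empTeta (xhat : T.Cell → Euc D) (x : Fin n → Euc D) (jn : ℕ) (η : ℝ) : Set T.Cell :=
  if ∀ I, T.depth I ≤ jn → T.empEps xhat x I < η then {T.root}
  else {I | ∃ k, ∃ J ∈ T.descend k I, T.depth J ≤ jn ∧ η ≤ T.empEps xhat x J}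

end PartitionTree

/-- Assumption A: `ediam(I) ≤ C₁ ρ(I)^s` and `ediam(I) ≤ C₂ b^{-j_I}` for every cell `I`. -/
def AssumptionA {D : ℕ} {X : Set (Euc D)} {a : ℕ} (T : PartitionTree D X a)
    (ρ : Measure (Euc D)) (b s C₁ C₂ : ℝ) : Prop :=
  ∀ I : T.Cell,
    ediam ρ (T.cset I) ≤ C₁ * (ρ (T.cset I)).toReal ^ s ∧
    ediam ρ (T.cset I) ≤ C₂ * b ^ (-(T.depth I : ℝ))


/-!
The parent's center `c_I` is a competitor for each child `J`, whose own center minimizes the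
squared error on `J` (bias-variance decomposition); hence `ε_I² ≥ 0`. Summed over all cells of
depth `< N`, the `ε_I²` telescope to `ℰ_𝒳 - ∑_{depth J = N} ℰ_J ≤ ℰ_𝒳`, so at most `ℰ_𝒳 / η²`
cells have `ε_I ≥ η`, and `𝒯_η` consists of their finitely many ancestors.
-/

section CenterOfMass

open scoped RealInnerProductSpace

variable {E : Type*} [NormedAddCommGroup E] [MeasurableSpace E] {μ : Measure E}
  [IsFiniteMeasure μ]

lemma integrable_norm_sub_sq (hμ : MemLp id 2 μ) (c : E) :
    Integrable (fun x => ‖x - c‖ ^ 2) μ :=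
  (hμ.sub (memLp_const c)).integrable_norm_pow two_ne_zero

/-- Bias-variance decomposition. -/
lemma integral_norm_sub_sq_eq [InnerProductSpace ℝ E] [CompleteSpace E] (hμ : MemLp id 2 μ)
    (c : E) :
    ∫ x, ‖x - c‖ ^ 2 ∂μ
      = ∫ x, ‖x - (μ univ).toReal⁻¹ • ∫ y, y ∂μ‖ ^ 2 ∂μ
        + (μ univ).toReal * ‖(μ univ).toReal⁻¹ • ∫ y, y ∂μ - c‖ ^ 2 := by
  rcases eq_zero_or_neZero μ with rfl | hμ0
  · simp
  set m := (μ univ).toReal⁻¹ • ∫ y, y ∂μ with hm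
  have hid : Integrable (fun x : E => x) μ := hμ.integrable one_le_two
  have hmass : (μ univ).toReal ≠ 0 := by simp [ENNReal.toReal_eq_zero_iff, NeZero.ne]
  have hcent : Integrable (fun x => x - m) μ := hid.sub (integrable_const m)
  have hmean : ∫ x, (x - m) ∂μ = 0 := by
    rw [integral_sub hid (integrable_const m), integral_const, measureReal_def, hm,
      smul_inv_smul₀ hmass, sub_self]
  have hinner : Integrable (fun x => ⟪m - c, x - m⟫) μ := hcent.const_inner _
  have hdrift : ∫ x, ⟪m - c, x - m⟫ ∂μ = 0 := by
    rw [integral_inner hcent, hmean, inner_zero_right]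
  have hcross : Integrable (fun x => 2 * ⟪m - c, x - m⟫ + ‖m - c‖ ^ 2) μ :=
    (hinner.const_mul 2).add (integrable_const _)
  calc ∫ x, ‖x - c‖ ^ 2 ∂μ
      = ∫ x, (‖x - m‖ ^ 2 + (2 * ⟪m - c, x - m⟫ + ‖m - c‖ ^ 2)) ∂μ := by
        congr 1 with x
        rw [← sub_add_sub_cancel x m c, norm_add_sq_real, real_inner_comm]
        ring
    _ = ∫ x, ‖x - m‖ ^ 2 ∂μ + (μ univ).toReal * ‖m - c‖ ^ 2 := by
        rw [integral_add (integrable_norm_sub_sq hμ m) hcross,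
          integral_add (hinner.const_mul 2) (integrable_const _), integral_const_mul,
          hdrift, integral_const, measureReal_def, smul_eq_mul]
        ring

end CenterOfMass

namespace PartitionTree

variable {D : ℕ} {X : Set (Euc D)} {a : ℕ} (T : PartitionTree D X a)

lemma depth_of_mem_children {I J : T.Cell} (h : J ∈ T.children I) :
    T.depth J = T.depth I + 1 := by
  rw [← h.1, T.depth_parent J h.2]

lemma children_finite (I : T.Cell) : (T.children I).Finite :=
  (T.level_finite (T.depth I + 1)).subset fun _ hJ => T.depth_of_mem_children hJ

lemma descend_subset_descend_succ {I J : T.Cell} (h : J ∈ T.children I) (k : ℕ) :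
    T.descend k J ⊆ T.descend (k + 1) I := by
  induction k with
  | zero =>
    rintro K rfl
    exact mem_biUnion (mem_singleton I) h
  | succ k ih =>
    intro K hK
    obtain ⟨L, hL, hKL⟩ := mem_iUnion₂.1 hK
    exact mem_biUnion (ih hL) hKL

lemma iterate_parent_and_depth_of_mem_descend {k : ℕ} {I J : T.Cell}
    (h : J ∈ T.descend k I) : T.parent^[k] J = I ∧ T.depth J = T.depth I + k := by
  induction k generalizing J with
  | zero =>
    obtain rfl := h
    simp
  | succ k ih =>
    obtain ⟨L, hL, hJL⟩ := mem_iUnion₂.1 h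
    obtain ⟨hpar, hdepth⟩ := ih hL
    refine ⟨by rw [Function.iterate_succ_apply, hJL.1, hpar], ?_⟩
    rw [T.depth_of_mem_children hJL, hdepth, add_assoc]

lemma finite_setOf_exists_descend_mem {B : Set T.Cell} (hB : B.Finite) :
    {I | ∃ k, ∃ J ∈ T.descend k I, J ∈ B}.Finite := by
  refine (hB.biUnion fun J _ => (finite_Iic (T.depth J)).image (T.parent^[·] J)).subset ?_
  rintro I ⟨k, J, hJ, hJB⟩
  obtain ⟨hpar, hdepth⟩ := T.iterate_parent_and_depth_of_mem_descend hJ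
  exact mem_biUnion hJB ⟨k, by simp only [mem_Iic]; omega, hpar⟩

def level (j : ℕ) : Finset T.Cell := (T.level_finite j).toFinset

@[simp]
lemma mem_level {j : ℕ} {I : T.Cell} : I ∈ T.level j ↔ T.depth I = j :=
  Set.Finite.mem_toFinset _

lemma level_zero : T.level 0 = {T.root} := by
  ext I
  rw [mem_level, Finset.mem_singleton]
  exact ⟨T.eq_root_of_depth_eq_zero I, fun h => h ▸ T.depth_root⟩

lemma level_succ (j : ℕ) :
    T.level (j + 1) = (T.level j).biUnion fun I => (T.children_finite I).toFinset := by
  ext J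
  simp only [mem_level, Finset.mem_biUnion, Set.Finite.mem_toFinset]
  constructor
  · intro hJ
    have hJroot : J ≠ T.root := by
      rintro rfl
      rw [T.depth_root] at hJ
      omega
    have := T.depth_parent J hJroot
    exact ⟨T.parent J, by omega, rfl, hJroot⟩
  · rintro ⟨I, rfl, hJ⟩
    exact T.depth_of_mem_children hJ

variable {ρ : Measure (Euc D)} (xstar : T.Cell → Euc D)

lemma isSubtree_Teta (η : ℝ) : T.IsSubtree (T.Teta ρ xstar η) := by
  intro I hI
  unfold Teta at hI ⊢
  split_ifs at hI ⊢
  · rw [mem_singleton_iff.1 hI, T.parent_root]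
    exact mem_singleton _
  · obtain ⟨k, J, hJ, hηJ⟩ := hI
    by_cases hIroot : I = T.root
    · rw [hIroot, T.parent_root]
      exact ⟨k, J, hIroot ▸ hJ, hηJ⟩
    · exact ⟨k + 1, J, T.descend_subset_descend_succ ⟨rfl, hIroot⟩ k hJ, hηJ⟩

lemma cellErr_nonneg (I : T.Cell) : 0 ≤ T.cellErr ρ xstar I :=
  integral_nonneg fun _ => by positivity

lemma epsSq_eq_sum (I : T.Cell) :
    T.epsSq ρ xstar I
      = T.cellErr ρ xstar I - ∑ J ∈ (T.children_finite I).toFinset, T.cellErr ρ xstar J := by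
  rw [epsSq, finsum_mem_eq_finite_toFinset_sum _ (T.children_finite I)]

lemma sum_epsSq_level (j : ℕ) :
    ∑ I ∈ T.level j, T.epsSq ρ xstar I
      = ∑ I ∈ T.level j, T.cellErr ρ xstar I - ∑ I ∈ T.level (j + 1), T.cellErr ρ xstar I := by
  have hdisj : (T.level j : Set T.Cell).PairwiseDisjoint
      fun I => (T.children_finite I).toFinset := by
    intro I _ I' _ hne
    refine Finset.disjoint_left.2 fun J hJ hJ' => hne ?_
    rw [← ((T.children_finite I).mem_toFinset.1 hJ).1,
      ← ((T.children_finite I').mem_toFinset.1 hJ').1]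
  rw [level_succ, Finset.sum_biUnion hdisj, ← Finset.sum_sub_distrib]
  exact Finset.sum_congr rfl fun I _ => T.epsSq_eq_sum xstar I

variable [IsFiniteMeasure ρ]

lemma cellErr_le_integral_norm_sub_sq (hρ : MemLp id 2 ρ) (I : T.Cell) (c : Euc D) :
    T.cellErr ρ xstar I ≤ ∫ x in T.cset I, ‖x - c‖ ^ 2 ∂ρ := by
  rw [cellErr, center]
  split_ifs with hI
  · rw [integral_norm_sub_sq_eq (hρ.restrict _) c, Measure.restrict_apply_univ]
    exact le_add_of_nonneg_right (by positivity)
  · rw [not_not.1 hI |> Measure.restrict_eq_zero.2]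
    simp

lemma integral_norm_sub_sq_eq_sum_children (hρ : MemLp id 2 ρ) (I : T.Cell) (c : Euc D) :
    ∫ x in T.cset I, ‖x - c‖ ^ 2 ∂ρ
      = ∑ J ∈ (T.children_finite I).toFinset, ∫ x in T.cset J, ‖x - c‖ ^ 2 ∂ρ := by
  have hcover : T.cset I = ⋃ J ∈ (T.children_finite I).toFinset, T.cset J := by
    simp_rw [Set.Finite.mem_toFinset]
    exact T.cset_eq_iUnion_children I
  rw [hcover]
  refine integral_biUnion_finset _ (fun J _ => T.cset_measurable J) ?_
    fun J _ => integrable_norm_sub_sq (hρ.restrict _) c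
  intro J hJ J' hJ' hne
  simp only [Set.Finite.coe_toFinset] at hJ hJ'
  exact T.level_disjoint J J'
    (by rw [T.depth_of_mem_children hJ, T.depth_of_mem_children hJ']) hne

lemma epsSq_nonneg (hρ : MemLp id 2 ρ) (I : T.Cell) : 0 ≤ T.epsSq ρ xstar I := by
  rw [epsSq_eq_sum, sub_nonneg, cellErr, T.integral_norm_sub_sq_eq_sum_children hρ I]
  exact Finset.sum_le_sum fun J _ => T.cellErr_le_integral_norm_sub_sq xstar hρ J _

lemma sum_epsSq_le_cellErr_root (hρ : MemLp id 2 ρ) (F : Finset T.Cell) :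
    ∑ I ∈ F, T.epsSq ρ xstar I ≤ T.cellErr ρ xstar T.root := by
  set N := F.sup T.depth + 1
  set levelErr := fun j => ∑ I ∈ T.level j, T.cellErr ρ xstar I
  have hF : F ⊆ (Finset.range N).biUnion T.level := fun I hI =>
    Finset.mem_biUnion.2
      ⟨T.depth I, Finset.mem_range.2 (Nat.lt_succ_of_le (Finset.le_sup hI)), T.mem_level.2 rfl⟩
  have hdisj : (Finset.range N : Set ℕ).PairwiseDisjoint T.level := fun j _ j' _ hne =>
    Finset.disjoint_left.2 fun I hI hI' =>
      hne ((T.mem_level.1 hI).symm.trans (T.mem_level.1 hI'))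
  calc ∑ I ∈ F, T.epsSq ρ xstar I
      ≤ ∑ I ∈ (Finset.range N).biUnion T.level, T.epsSq ρ xstar I :=
        Finset.sum_le_sum_of_subset_of_nonneg hF fun I _ _ => T.epsSq_nonneg xstar hρ I
    _ = ∑ j ∈ Finset.range N, (levelErr j - levelErr (j + 1)) := by
        rw [Finset.sum_biUnion hdisj]
        exact Finset.sum_congr rfl fun j _ => T.sum_epsSq_level xstar j
    _ = levelErr 0 - levelErr N := Finset.sum_range_sub' _ N
    _ ≤ levelErr 0 := sub_le_self _ (Finset.sum_nonneg fun I _ => T.cellErr_nonneg xstar I)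
    _ = T.cellErr ρ xstar T.root := by simp only [levelErr, level_zero, Finset.sum_singleton]

lemma finite_setOf_le_eps (hρ : MemLp id 2 ρ) {η : ℝ} (hη : 0 < η) :
    {I | η ≤ T.eps ρ xstar I}.Finite := by
  set E := T.cellErr ρ xstar T.root
  by_contra hinf
  obtain ⟨F, hFB, hcard⟩ := Set.Infinite.exists_subset_card_eq hinf (⌊E / η ^ 2⌋₊ + 1)
  have hsum : (F.card : ℝ) * η ^ 2 ≤ E :=
    calc (F.card : ℝ) * η ^ 2 = ∑ _ ∈ F, η ^ 2 := by rw [Finset.sum_const, nsmul_eq_mul]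
      _ ≤ ∑ I ∈ F, T.epsSq ρ xstar I :=
        Finset.sum_le_sum fun I hI => (Real.le_sqrt' hη).1 (hFB hI)
      _ ≤ E := T.sum_epsSq_le_cellErr_root xstar hρ F
  have hlt : E / η ^ 2 < F.card := by
    rw [hcard]
    push_cast
    exact Nat.lt_floor_add_one _
  rw [div_lt_iff₀ (by positivity)] at hlt
  linarith

lemma Teta_finite (hρ : MemLp id 2 ρ) {η : ℝ} (hη : 0 < η) : (T.Teta ρ xstar η).Finite := by
  unfold Teta
  split_ifs
  · exact finite_singleton _
  · exact T.finite_setOf_exists_descend_mem (T.finite_setOf_le_eps xstar hρ hη)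

end PartitionTree

theorem stmt_4_general {D : ℕ} {X : Set (Euc D)} {a : ℕ} (T : PartitionTree D X a)
    (hXb : Bornology.IsBounded X)
    (ρ : Measure (Euc D)) [IsProbabilityMeasure ρ] (hρX : ρ Xᶜ = 0)
    (xstar : T.Cell → Euc D)
    (η : ℝ) (hη : 0 < η) :
    T.IsSubtree (T.Teta ρ xstar η) ∧ (T.Teta ρ xstar η).Finite := by
  obtain ⟨R, hR⟩ := hXb.exists_norm_le
  have hX : ∀ᵐ x ∂ρ, x ∈ X := mem_ae_iff.2 hρX
  have hρ : MemLp id 2 ρ := .of_bound measurable_id.aestronglyMeasurable R (hX.mono hR)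
  exact ⟨T.isSubtree_Teta xstar η, T.Teta_finite xstar hρ hη⟩

theorem stmt_4 {D : ℕ} {X : Set (Euc D)} {a : ℕ} (ha : 1 ≤ a) (T : PartitionTree D X a)
    (hX0 : (0 : Euc D) ∈ X) (hXb : Bornology.IsBounded X) (hXd : Metric.diam X ≤ 1)
    (ρ : Measure (Euc D)) [IsProbabilityMeasure ρ] (hρX : ρ Xᶜ = 0)
    (xstar : T.Cell → Euc D) (hxstar : ∀ I, xstar I ∈ X)
    (η : ℝ) (hη : 0 < η) :
    T.IsSubtree (T.Teta ρ xstar η) ∧ (T.Teta ρ xstar η).Finite :=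
  stmt_4_general T hXb ρ hρX xstar η hη
end
end

section
/- Let I be a cell with ρ_I > 0. Then for every t > 0, P( ‖ĉ_I − c_I‖ > t ) ≤ 2 exp( −n ρ_I t² / 8 ), where ĉ_I is the empirical center of mass of the cell I and c_I its population center of mass. -/
open MeasureTheory Set ProbabilityTheory
open scoped BigOperators ENNReal NNReal

attribute [local instance] Classical.propDecidable

noncomputable section

open Real
open scoped InnerProductSpace

/-!
Put `Yᵢ = 1_I(Xᵢ) (Xᵢ - c_I)`, so that `n_I (ĉ_I - c_I) = ∑ᵢ Yᵢ` and the deviation event forces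
`t n_I ≤ ‖∑ᵢ Yᵢ‖`; there the potential `cosh (t ‖∑ᵢ Yᵢ‖) e^{-t² n_I}` is at least `1 / 2`.
Since `‖Yᵢ‖ ≤ 1` and `Yᵢ` is centred on `I`, convexity of `s ↦ cosh (t √s)` bounds
`cosh (t ‖x + Yᵢ‖)` on `I` by an affine function of `Yᵢ`, so each sample multiplies the expected
potential by at most `1 - ρ_I + ρ_I cosh t e^{-t²} ≤ exp (-ρ_I t² / 8)` (for `t ≤ 1`; for `t > 1`
the event is empty because `diam 𝒳 ≤ 1`). Markov's inequality concludes.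
-/

theorem convexOn_cosh_mul_sqrt (l : ℝ) : ConvexOn ℝ (Ici 0) fun s => cosh (l * √s) := by
  have hasSum_cosh_mul_sqrt : ∀ {s : ℝ}, 0 ≤ s →
      HasSum (fun k => (l ^ 2 * s) ^ k / (2 * k).factorial) (cosh (l * √s)) := fun {s} hs => by
    convert hasSum_cosh (l * √s) using 2 with k
    rw [pow_mul, mul_pow l, sq_sqrt hs, mul_pow]
  refine ⟨convex_Ici 0, fun x (hx : 0 ≤ x) y (hy : 0 ≤ y) a b ha hb hab => ?_⟩
  refine hasSum_le (fun k => ?_) (hasSum_cosh_mul_sqrt (by positivity))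
    (((hasSum_cosh_mul_sqrt hx).mul_left a).add ((hasSum_cosh_mul_sqrt hy).mul_left b))
  have hpow := (convexOn_pow k).2 (mem_Ici.2 (by positivity : 0 ≤ l ^ 2 * x))
    (mem_Ici.2 (by positivity : 0 ≤ l ^ 2 * y)) ha hb hab
  simp only [smul_eq_mul] at hpow ⊢
  rw [show l ^ 2 * (a * x + b * y) = a * (l ^ 2 * x) + b * (l ^ 2 * y) by ring]
  calc _ ≤ (a * (l ^ 2 * x) ^ k + b * (l ^ 2 * y) ^ k) / (2 * k).factorial := by gcongr
    _ = _ := by ring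

theorem cosh_mul_sqrt_le_cosh_mul_sqrt (l : ℝ) {s u : ℝ} (hsu : s ≤ u) :
    cosh (l * √s) ≤ cosh (l * √u) := by
  rw [cosh_le_cosh, abs_mul, abs_mul, abs_of_nonneg (sqrt_nonneg s),
    abs_of_nonneg (sqrt_nonneg u)]
  gcongr

theorem cosh_mul_sqrt_sq (l a : ℝ) : cosh (l * √(a ^ 2)) = cosh (l * a) := by
  rw [sqrt_sq_eq_abs, ← cosh_abs, abs_mul, abs_abs, ← abs_mul, cosh_abs]

/-- The chord of the convex function `s ↦ cosh (l √s)` between `(‖x‖ - 1)²` and `(‖x‖ + 1)²`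
dominates it at `‖x + y‖² ≤ ‖x‖² + 2 ⟪x, y⟫ + 1`. -/
theorem cosh_mul_norm_add_le {F : Type*} [NormedAddCommGroup F] [InnerProductSpace ℝ F]
    (l : ℝ) (x : F) {y : F} (hy : ‖y‖ ≤ 1) :
    cosh (l * ‖x + y‖) ≤ cosh l * cosh (l * ‖x‖) + sinh l * sinh (l * ‖x‖) / ‖x‖ * ⟪x, y⟫_ℝ := by
  rcases (norm_nonneg x).eq_or_lt with hr | hr
  · rw [norm_eq_zero.1 hr.symm, zero_add, norm_zero]
    simp only [mul_zero, cosh_zero, sinh_zero, zero_div, zero_mul, add_zero, mul_one]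
    rw [cosh_le_cosh, abs_mul, abs_of_nonneg (norm_nonneg y)]
    exact mul_le_of_le_one_right (abs_nonneg l) hy
  set r := ‖x‖
  set u := ⟪x, y⟫_ℝ
  have hr' : r ≠ 0 := hr.ne'
  have hnorm : ‖x + y‖ ^ 2 ≤ r ^ 2 + 2 * u + 1 := by
    rw [norm_add_sq_real]
    nlinarith [norm_nonneg y]
  have hu : |u| ≤ r := by
    simpa [r] using (abs_real_inner_le_norm x y).trans (mul_le_of_le_one_right hr.le hy)
  have hα : 0 ≤ (r - u) / (2 * r) := div_nonneg (by linarith [le_abs_self u]) (by positivity)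
  have hβ : 0 ≤ (r + u) / (2 * r) := div_nonneg (by linarith [neg_abs_le u]) (by positivity)
  have hchord := (convexOn_cosh_mul_sqrt l).2 (mem_Ici.2 (sq_nonneg (r - 1)))
    (mem_Ici.2 (sq_nonneg (r + 1))) hα hβ (by field_simp; ring)
  simp only [smul_eq_mul, cosh_mul_sqrt_sq] at hchord
  calc cosh (l * ‖x + y‖) = cosh (l * √(‖x + y‖ ^ 2)) := by rw [sqrt_sq (norm_nonneg _)]
    _ ≤ cosh (l * √(r ^ 2 + 2 * u + 1)) := cosh_mul_sqrt_le_cosh_mul_sqrt l hnorm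
    _ = cosh (l * √((r - u) / (2 * r) * (r - 1) ^ 2 + (r + u) / (2 * r) * (r + 1) ^ 2)) := by
      congr 3; field_simp; ring
    _ ≤ _ := hchord
    _ = _ := by
      rw [show l * (r - 1) = l * r - l by ring, show l * (r + 1) = l * r + l by ring,
        cosh_sub, cosh_add]
      field_simp
      ring

theorem lintegral_cosh_mul_norm_add_le {α F : Type*} [MeasurableSpace α] [NormedAddCommGroup F]
    [InnerProductSpace ℝ F] [CompleteSpace F] {μ : Measure α} [IsFiniteMeasure μ] {W : α → F}
    (hW : Integrable W μ) (hW_le : ∀ᵐ w ∂μ, ‖W w‖ ≤ 1) (hW_mean : ∫ w, W w ∂μ = 0) (l : ℝ)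
    (x : F) :
    ∫⁻ w, ENNReal.ofReal (cosh (l * ‖x + W w‖)) ∂μ ≤
      ENNReal.ofReal (μ.real univ * (cosh l * cosh (l * ‖x‖))) := by
  set g : α → ℝ := fun w => cosh l * cosh (l * ‖x‖) + sinh l * sinh (l * ‖x‖) / ‖x‖ * ⟪x, W w⟫_ℝ
  have hg : Integrable g μ := (integrable_const _).add ((hW.const_inner x).const_mul _)
  have hle : ∀ᵐ w ∂μ, cosh (l * ‖x + W w‖) ≤ g w :=
    hW_le.mono fun w hw => cosh_mul_norm_add_le l x hw
  calc ∫⁻ w, ENNReal.ofReal (cosh (l * ‖x + W w‖)) ∂μ ≤ ∫⁻ w, ENNReal.ofReal (g w) ∂μ :=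
        lintegral_mono_ae (hle.mono fun w hw => ENNReal.ofReal_le_ofReal hw)
    _ = ENNReal.ofReal (∫ w, g w ∂μ) :=
        (ofReal_integral_eq_lintegral_ofReal hg
          (hle.mono fun w hw => (cosh_pos _).le.trans hw)).symm
    _ = _ := by
        rw [integral_add (integrable_const _) ((hW.const_inner x).const_mul _), integral_const,
          integral_const_mul, integral_inner hW, hW_mean, inner_zero_right, mul_zero, add_zero,
          smul_eq_mul]

theorem lintegral_pi_comp_add_sum_le {α G : Type*} [MeasurableSpace α] [AddCommMonoid G]
    [MeasurableSpace G] [MeasurableAdd₂ G] (μ : Measure α) [SigmaFinite μ]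
    {Y : α → G} (hY : Measurable Y) {Ψ : G → ℝ≥0∞} (hΨ : Measurable Ψ) {q : ℝ≥0∞}
    (hstep : ∀ x, ∫⁻ w, Ψ (x + Y w) ∂μ ≤ q * Ψ x) (n : ℕ) (x : G) :
    ∫⁻ v : Fin n → α, Ψ (x + ∑ i, Y (v i)) ∂Measure.pi (fun _ => μ) ≤ q ^ n * Ψ x := by
  induction n generalizing x with
  | zero => simp
  | succ n ih =>
    have hmeas : Measurable fun v : Fin (n + 1) → α => Ψ (x + ∑ i, Y (v i)) :=
      hΨ.comp (measurable_const.add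
        (Finset.measurable_sum _ fun i _ => hY.comp (measurable_pi_apply i)))
    rw [← (measurePreserving_piFinSuccAbove (fun _ => μ) 0).symm.lintegral_comp hmeas,
      lintegral_prod _ ?_]
    swap
    · exact (hmeas.comp (MeasurableEquiv.measurable _)).aemeasurable
    simp only [MeasurableEquiv.piFinSuccAbove_symm_apply,
      Fin.insertNthEquiv_zero, Fin.consEquiv_apply, Fin.sum_univ_succ, Fin.cons_zero,
      Fin.cons_succ, ← add_assoc]
    calc ∫⁻ w, ∫⁻ v, Ψ (x + Y w + ∑ i : Fin n, Y (v i)) ∂Measure.pi (fun _ => μ) ∂μ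
        ≤ ∫⁻ w, q ^ n * Ψ (x + Y w) ∂μ := lintegral_mono fun w => ih (x + Y w)
      _ ≤ q ^ n * (q * Ψ x) := by
        have hΨY : Measurable fun w => Ψ (x + Y w) := hΨ.comp (hY.const_add x)
        rw [lintegral_const_mul _ hΨY]
        gcongr
        exact hstep x
      _ = q ^ (n + 1) * Ψ x := by ring

theorem one_half_le_cosh_mul_exp_neg {a b : ℝ} (ha : 0 ≤ a) (hab : a ≤ b) :
    1 / 2 ≤ cosh b * exp (-a) := by
  have hcosh : exp a / 2 ≤ cosh b :=
    calc exp a / 2 ≤ cosh a := by rw [cosh_eq]; linarith [exp_pos (-a)]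
      _ ≤ cosh b := by
        rwa [cosh_le_cosh, abs_of_nonneg ha, abs_of_nonneg (ha.trans hab)]
  calc 1 / 2 = exp a / 2 * exp (-a) := by
        rw [div_mul_eq_mul_div, ← exp_add, add_neg_cancel, exp_zero]
    _ ≤ cosh b * exp (-a) := by gcongr

theorem pow_mul_cosh_mul_exp_neg_sq_add_one_sub_le {p t : ℝ} (hp0 : 0 ≤ p) (hp1 : p ≤ 1)
    (ht : t ^ 2 ≤ 1) (n : ℕ) :
    (p * (cosh t * exp (-t ^ 2)) + (1 - p)) ^ n ≤ exp (-(n * p * t ^ 2) / 8) := by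
  have hdecay : cosh t * exp (-t ^ 2) ≤ 1 - t ^ 2 / 8 := by
    have hexp : exp (t ^ 2 / 2) * (1 - t ^ 2 / 8) ≥ 1 := by
      nlinarith [add_one_le_exp (t ^ 2 / 2), sq_nonneg t]
    calc cosh t * exp (-t ^ 2) ≤ exp (t ^ 2 / 2) * exp (-t ^ 2) := by
          gcongr; exact cosh_le_exp_half_sq t
      _ = (exp (t ^ 2 / 2))⁻¹ := by rw [← exp_neg, ← exp_add]; ring_nf
      _ ≤ 1 - t ^ 2 / 8 := by
          rw [inv_le_iff_one_le_mul₀ (exp_pos _)]; linarith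
  have hq0 : 0 ≤ p * (cosh t * exp (-t ^ 2)) + (1 - p) :=
    add_nonneg (by have := cosh_pos t; positivity) (sub_nonneg.2 hp1)
  have hq : p * (cosh t * exp (-t ^ 2)) + (1 - p) ≤ exp (-(p * t ^ 2 / 8)) := by
    nlinarith [add_one_le_exp (-(p * t ^ 2 / 8))]
  calc (p * (cosh t * exp (-t ^ 2)) + (1 - p)) ^ n ≤ exp (-(p * t ^ 2 / 8)) ^ n := by gcongr
    _ = exp (-(n * p * t ^ 2) / 8) := by rw [← exp_nat_mul]; ring_nf

section CellSums

variable {F : Type*} [NormedAddCommGroup F] [MeasurableSpace F] [BorelSpace F]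

/-- The contribution of a sample point `w` to the pair `(∑ᵢ 1_S(Xᵢ) (Xᵢ - c), #{i | Xᵢ ∈ S})`. -/
def cellIncrement (S : Set F) (c w : F) : F × ℝ := (S.indicator (· - c) w, S.indicator 1 w)

def coshPotential (t : ℝ) (z : F × ℝ) : ℝ≥0∞ :=
  ENNReal.ofReal (cosh (t * ‖z.1‖) * exp (-(t ^ 2 * z.2)))

theorem measurable_cellIncrement {S : Set F} (hS : MeasurableSet S) (c : F) :
    Measurable (cellIncrement S c) :=
  ((measurable_id.sub_const c).indicator hS).prodMk (measurable_const.indicator hS)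

theorem measurable_coshPotential (t : ℝ) : Measurable (coshPotential (F := F) t) := by
  unfold coshPotential; fun_prop

variable [InnerProductSpace ℝ F] [CompleteSpace F] [SecondCountableTopology F]
  {ρ : Measure F} [IsProbabilityMeasure ρ] {S : Set F} {c : F}

theorem lintegral_coshPotential_add_cellIncrement_le (hS : MeasurableSet S)
    (hS_le : ∀ w ∈ S, ‖w - c‖ ≤ 1) (hS_mean : ∫ w in S, (w - c) ∂ρ = 0) (t : ℝ) (z : F × ℝ) :
    ∫⁻ w, coshPotential t (z + cellIncrement S c w) ∂ρ ≤
      ENNReal.ofReal (ρ.real S * (cosh t * exp (-t ^ 2)) + (1 - ρ.real S)) *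
        coshPotential t z := by
  have hin : ∫⁻ w in S, coshPotential t (z + cellIncrement S c w) ∂ρ =
      ∫⁻ w in S, ENNReal.ofReal (cosh (t * ‖z.1 + (w - c)‖)) *
        ENNReal.ofReal (exp (-(t ^ 2 * (z.2 + 1)))) ∂ρ := by
    refine setLIntegral_congr_fun hS fun w hw => ?_
    simp [coshPotential, cellIncrement, hw, ENNReal.ofReal_mul (cosh_pos _).le]
  have hout : ∫⁻ w in Sᶜ, coshPotential t (z + cellIncrement S c w) ∂ρ =
      ∫⁻ w in Sᶜ, coshPotential t z ∂ρ := by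
    refine setLIntegral_congr_fun hS.compl fun w hw => ?_
    simp only [cellIncrement, indicator_of_notMem hw, Prod.mk_zero_zero, add_zero]
  have hW : Integrable (fun w => w - c) (ρ.restrict S) :=
    Measure.integrableOn_of_bounded (M := 1) (measure_ne_top ρ S)
      (measurable_id.sub_const c).aestronglyMeasurable
      ((ae_restrict_iff' hS).2 (.of_forall hS_le))
  have hpin := lintegral_cosh_mul_norm_add_le hW ((ae_restrict_iff' hS).2 (.of_forall hS_le))
    hS_mean t z.1
  rw [measureReal_restrict_apply_univ] at hpin
  rw [← lintegral_add_compl _ hS, hin, hout, lintegral_mul_const _ (by fun_prop),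
    setLIntegral_const, ← ofReal_measureReal, probReal_compl_eq_one_sub hS]
  have hp0 : 0 ≤ ρ.real S := measureReal_nonneg
  have hp1 : 0 ≤ 1 - ρ.real S := sub_nonneg.2 measureReal_le_one
  have hcosh := (cosh_pos t).le
  have hcosh' := (cosh_pos (t * ‖z.1‖)).le
  calc _ ≤ ENNReal.ofReal (ρ.real S * (cosh t * cosh (t * ‖z.1‖))) *
          ENNReal.ofReal (exp (-(t ^ 2 * (z.2 + 1)))) +
        coshPotential t z * ENNReal.ofReal (1 - ρ.real S) := by
        gcongr
    _ = _ := by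
      rw [coshPotential, ← ENNReal.ofReal_mul (by positivity),
        ← ENNReal.ofReal_mul (by positivity), ← ENNReal.ofReal_add (by positivity) (by positivity),
        ← ENNReal.ofReal_mul (by positivity),
        mul_add (t ^ 2), mul_one, neg_add, exp_add]
      ring_nf

theorem measure_mul_sum_indicator_le_norm_sum_indicator_le {Ω : Type*} [MeasurableSpace Ω]
    {P : Measure Ω} {n : ℕ} {Xs : Fin n → Ω → F} (hXs : ∀ i, Measurable (Xs i))
    (hindep : iIndepFun Xs P) (hlaw : ∀ i, P.map (Xs i) = ρ) (hS : MeasurableSet S)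
    (hS_le : ∀ w ∈ S, ‖w - c‖ ≤ 1) (hS_mean : ∫ w in S, (w - c) ∂ρ = 0) {t : ℝ} (ht0 : 0 ≤ t)
    (ht1 : t ≤ 1) :
    P {ω | t * ∑ i, S.indicator 1 (Xs i ω) ≤ ‖∑ i, S.indicator (· - c) (Xs i ω)‖} ≤
      ENNReal.ofReal (2 * exp (-(n * ρ.real S * t ^ 2) / 8)) := by
  set q := ENNReal.ofReal (ρ.real S * (cosh t * exp (-t ^ 2)) + (1 - ρ.real S))
  have hΨ := measurable_coshPotential (F := F) t
  have hY := measurable_cellIncrement hS c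
  have hmeas :
      Measurable fun v : Fin n → F => coshPotential t (0 + ∑ i, cellIncrement S c (v i)) :=
    hΨ.comp (measurable_const.add
      (Finset.measurable_sum _ fun i _ => hY.comp (measurable_pi_apply i)))
  have hlaw_pi : P.map (fun ω i => Xs i ω) = Measure.pi fun _ => ρ := by
    rw [hindep.map_fun_eq_pi_map fun i => (hXs i).aemeasurable]
    simp only [hlaw]
  calc P {ω | t * ∑ i, S.indicator 1 (Xs i ω) ≤ ‖∑ i, S.indicator (· - c) (Xs i ω)‖}
      ≤ P {ω | 2⁻¹ ≤ coshPotential t (0 + ∑ i, cellIncrement S c (Xs i ω))} := by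
        refine measure_mono fun ω hω => ?_
        rw [mem_ofPred_eq] at hω
        have hN : (0 : ℝ) ≤ ∑ i, S.indicator 1 (Xs i ω) :=
          Finset.sum_nonneg fun i _ => indicator_nonneg (fun _ _ => zero_le_one) _
        have hbound := one_half_le_cosh_mul_exp_neg (mul_nonneg (sq_nonneg t) hN)
          (by nlinarith : t ^ 2 * ∑ i, S.indicator 1 (Xs i ω) ≤
            t * ‖∑ i, S.indicator (· - c) (Xs i ω)‖)
        rw [mem_ofPred_eq, coshPotential, zero_add, Prod.fst_sum, Prod.snd_sum, ← one_div,
          ← ENNReal.ofReal_one, ← ENNReal.ofReal_ofNat 2, ← ENNReal.ofReal_div_of_pos two_pos]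
        exact ENNReal.ofReal_le_ofReal hbound
    _ ≤ (∫⁻ ω, coshPotential t (0 + ∑ i, cellIncrement S c (Xs i ω)) ∂P) / 2⁻¹ :=
        meas_ge_le_lintegral_div (hmeas.comp (measurable_pi_lambda _ hXs)).aemeasurable
          (by norm_num) (by norm_num)
    _ = 2 * ∫⁻ v, coshPotential t (0 + ∑ i, cellIncrement S c (v i)) ∂Measure.pi fun _ => ρ := by
        rw [← hlaw_pi, lintegral_map hmeas (measurable_pi_lambda _ hXs), ENNReal.div_eq_inv_mul,
          inv_inv]
    _ ≤ 2 * (q ^ n * coshPotential t 0) := by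
        gcongr
        exact lintegral_pi_comp_add_sum_le ρ hY hΨ
          (lintegral_coshPotential_add_cellIncrement_le hS hS_le hS_mean t) n 0
    _ ≤ ENNReal.ofReal (2 * exp (-(n * ρ.real S * t ^ 2) / 8)) := by
        have hq0 : 0 ≤ ρ.real S * (cosh t * exp (-t ^ 2)) + (1 - ρ.real S) :=
          add_nonneg (by have := cosh_pos t; positivity) (sub_nonneg.2 measureReal_le_one)
        rw [coshPotential, Prod.fst_zero, Prod.snd_zero, mul_zero, norm_zero, mul_zero, neg_zero,
          cosh_zero, exp_zero, mul_one, ENNReal.ofReal_one, mul_one, ← ENNReal.ofReal_pow hq0,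
          ← ENNReal.ofReal_ofNat 2,
          ← ENNReal.ofReal_mul zero_le_two]
        gcongr
        exact pow_mul_cosh_mul_exp_neg_sq_add_one_sub_le measureReal_nonneg measureReal_le_one
          (by nlinarith) n

end CellSums

namespace PartitionTree

variable {D : ℕ} {X : Set (Euc D)} {a : ℕ} (T : PartitionTree D X a)

theorem cset_subset (I : T.Cell) : T.cset I ⊆ X :=
  (subset_biUnion_of_mem (u := T.cset) (show I ∈ {J | T.depth J = T.depth I} from rfl)).trans
    (T.level_cover _).subset

theorem center_eq_setAverage (ρ : Measure (Euc D)) (xstar : T.Cell → Euc D) {I : T.Cell}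
    (hI : ρ (T.cset I) ≠ 0) : T.center ρ xstar I = ⨍ w in T.cset I, w ∂ρ := by
  rw [center, if_pos hI, setAverage_eq]
  rfl

theorem norm_sub_center_le (hXb : Bornology.IsBounded X) (hXd : Metric.diam X ≤ 1)
    (ρ : Measure (Euc D)) [IsFiniteMeasure ρ] (xstar : T.Cell → Euc D) {I : T.Cell}
    (hI : ρ (T.cset I) ≠ 0) {z : Euc D} (hz : z ∈ X) : ‖z - T.center ρ xstar I‖ ≤ 1 := by
  have hball : ∀ w ∈ T.cset I, w ∈ Metric.closedBall z 1 := fun w hw =>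
    (Metric.dist_le_diam_of_mem hXb (T.cset_subset I hw) hz).trans hXd
  have hint : IntegrableOn id (T.cset I) ρ :=
    Measure.integrableOn_of_bounded (M := ‖z‖ + 1) (measure_ne_top _ _)
      measurable_id.aestronglyMeasurable <| (ae_restrict_iff' (T.cset_measurable I)).2 <|
        .of_forall fun w hw => (norm_le_norm_add_norm_sub' w z).trans <| by
          gcongr; exact mem_closedBall_iff_norm.1 (hball w hw)
  rw [T.center_eq_setAverage ρ xstar hI, norm_sub_rev, ← dist_eq_norm, ← Metric.mem_closedBall]
  exact (convex_closedBall z 1).set_average_mem Metric.isClosed_closedBall hI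
    (measure_ne_top _ _) ((ae_restrict_iff' (T.cset_measurable I)).2 (.of_forall hball)) hint

variable {n : ℕ}

theorem empCount_eq_card (x : Fin n → Euc D) (I : T.Cell) :
    T.empCount x I = (Finset.univ.filter fun i => x i ∈ T.cset I).card := by
  rw [empCount, ← Finset.coe_filter_univ, ncard_coe_finset]

theorem empCount_eq_sum_indicator (x : Fin n → Euc D) (I : T.Cell) :
    (T.empCount x I : ℝ) = ∑ i, (T.cset I).indicator 1 (x i) := by
  rw [empCount_eq_card, Finset.card_eq_sum_ones, Nat.cast_sum, Finset.sum_filter]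
  simp [indicator_apply]

theorem empCount_smul_empCenter_sub (xhat : T.Cell → Euc D) (x : Fin n → Euc D) (I : T.Cell)
    (z : Euc D) : (T.empCount x I : ℝ) • (T.empCenter xhat x I - z) =
      ∑ i, (T.cset I).indicator (· - z) (x i) := by
  have hsum : ∑ i, (T.cset I).indicator (· - z) (x i) = ∑ i with x i ∈ T.cset I, (x i - z) := by
    rw [Finset.sum_filter]
    simp [indicator_apply]
  rw [hsum, Finset.sum_sub_distrib, Finset.sum_const, ← empCount_eq_card, empCenter]
  split_ifs with h
  · rw [smul_sub, smul_smul, mul_inv_cancel₀ (Nat.cast_ne_zero.2 h), one_smul,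
      ← Finset.coe_filter_univ, finsum_mem_coe_finset, Nat.cast_smul_eq_nsmul]
  · have hcount := not_not.1 h
    have hnone : (Finset.univ.filter fun i => x i ∈ T.cset I) = ∅ := by
      rw [← Finset.card_eq_zero, ← empCount_eq_card, hcount]
    simp [hcount, hnone]

theorem norm_empCenter_sub_le {xhat : T.Cell → Euc D} {I : T.Cell} {z : Euc D}
    (hI : ∀ w ∈ T.cset I, ‖w - z‖ ≤ 1) (hxhat : ‖xhat I - z‖ ≤ 1) (x : Fin n → Euc D) :
    ‖T.empCenter xhat x I - z‖ ≤ 1 := by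
  rcases eq_or_ne (T.empCount x I) 0 with h | h
  · rwa [empCenter, if_neg (not_not.2 h)]
  have hN : (0 : ℝ) < T.empCount x I := Nat.cast_pos.2 (Nat.pos_of_ne_zero h)
  refine le_of_mul_le_mul_left ?_ hN
  calc (T.empCount x I : ℝ) * ‖T.empCenter xhat x I - z‖
      = ‖∑ i, (T.cset I).indicator (· - z) (x i)‖ := by
        rw [← empCount_smul_empCenter_sub, norm_smul, Real.norm_natCast]
    _ ≤ ∑ i, (T.cset I).indicator 1 (x i) := by
        refine (norm_sum_le _ _).trans (Finset.sum_le_sum fun i _ => ?_)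
        by_cases hx : x i ∈ T.cset I
        · simpa [hx] using hI _ hx
        · simp [hx]
    _ = T.empCount x I * 1 := by rw [mul_one, empCount_eq_sum_indicator]

end PartitionTree

theorem stmt_10_general {D : ℕ} {X : Set (Euc D)} {a : ℕ} (T : PartitionTree D X a)
    (hXb : Bornology.IsBounded X) (hXd : Metric.diam X ≤ 1)
    (ρ : Measure (Euc D)) [IsProbabilityMeasure ρ]
    (xstar : T.Cell → Euc D)
    {Ω : Type} [MeasurableSpace Ω] (P : Measure Ω)
    {n : ℕ} (Xs : Fin n → Ω → Euc D) (hXmeas : ∀ i, Measurable (Xs i))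
    (hindep : iIndepFun Xs P)
    (hlaw : ∀ i, Measure.map (Xs i) P = ρ)
    (xhat : T.Cell → Euc D) (hxhat : ∀ I, xhat I ∈ X)
    (I : T.Cell) (hI : ρ (T.cset I) ≠ 0) (t : ℝ) (ht : 0 < t) :
    P {ω | t < ‖T.empCenter xhat (fun i => Xs i ω) I - T.center ρ xstar I‖} ≤
      ENNReal.ofReal (2 * Real.exp (-((n : ℝ) * (ρ (T.cset I)).toReal * t ^ 2) / 8)) := by
  set c := T.center ρ xstar I
  have hXc : ∀ z ∈ X, ‖z - c‖ ≤ 1 := fun z hz => T.norm_sub_center_le hXb hXd ρ xstar hI hz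
  have hIc : ∀ w ∈ T.cset I, ‖w - c‖ ≤ 1 := fun w hw => hXc w (T.cset_subset I hw)
  rcases le_or_gt 1 t with ht1 | ht1
  · have hempty : {ω | t < ‖T.empCenter xhat (fun i => Xs i ω) I - c‖} = ∅ :=
      eq_empty_of_forall_notMem fun ω hω =>
        (ht1.trans_lt hω).not_ge (T.norm_empCenter_sub_le hIc (hXc _ (hxhat I)) _)
    simp [hempty]
  have hmean : ∫ w in T.cset I, (w - c) ∂ρ = 0 := by
    rw [show c = _ from T.center_eq_setAverage ρ xstar hI]
    exact setAverage_sub_setAverage (measure_ne_top ρ _) id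
  refine (measure_mono fun ω (hω : t < _) => ?_).trans
    (measure_mul_sum_indicator_le_norm_sum_indicator_le hXmeas hindep hlaw (T.cset_measurable I)
      hIc hmean ht.le ht1.le)
  show t * _ ≤ _
  rw [← T.empCount_eq_sum_indicator, ← T.empCount_smul_empCenter_sub xhat _ I c, norm_smul,
    Real.norm_natCast, mul_comm]
  exact mul_le_mul_of_nonneg_left hω.le (Nat.cast_nonneg _)

theorem stmt_10 {D : ℕ} {X : Set (Euc D)} {a : ℕ} (ha : 1 ≤ a) (T : PartitionTree D X a)
    (hX0 : (0 : Euc D) ∈ X) (hXb : Bornology.IsBounded X) (hXd : Metric.diam X ≤ 1)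
    (ρ : Measure (Euc D)) [IsProbabilityMeasure ρ] (hρX : ρ Xᶜ = 0)
    (xstar : T.Cell → Euc D) (hxstar : ∀ I, xstar I ∈ X)
    {Ω : Type} [MeasurableSpace Ω] (P : Measure Ω) [IsProbabilityMeasure P]
    {n : ℕ} (Xs : Fin n → Ω → Euc D) (hXmeas : ∀ i, Measurable (Xs i))
    (hindep : iIndepFun Xs P)
    (hlaw : ∀ i, Measure.map (Xs i) P = ρ)
    (xhat : T.Cell → Euc D) (hxhat : ∀ I, xhat I ∈ X)
    (I : T.Cell) (hI : ρ (T.cset I) ≠ 0) (t : ℝ) (ht : 0 < t) :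
    P {ω | t < ‖T.empCenter xhat (fun i => Xs i ω) I - T.center ρ xstar I‖} ≤
      ENNReal.ofReal (2 * Real.exp (-((n : ℝ) * (ρ (T.cset I)).toReal * t ^ 2) / 8)) :=
  stmt_10_general T hXb hXd ρ xstar P Xs hXmeas hindep hlaw xhat hxhat I hI t ht
end
end

section
/- Let I be a cell with ρ_I > 0. Then for every t > 0, P( |√(n_I/n) − √ρ_I| ≥ t ) ≤ 2 exp( −n t² / 2 ). -/
open MeasureTheory Set ProbabilityTheory
open scoped BigOperators ENNReal NNReal

attribute [local instance] Classical.propDecidable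

noncomputable section

/-! The count `n_I` is a sum of `n` independent Bernoulli(`ρ_I`) variables, so the moment generating
function of `n_I` is at most `exp (n ρ_I (eᵗ - 1))`, that of a Poisson variable. Optimising the
Chernoff bound in `t` gives the tails `exp (-n ρ_I klFun (a / ρ_I))` for `n_I ≥ n a` (`a ≥ ρ_I`) and
`n_I ≤ n a` (`a ≤ ρ_I`), and the squared Hellinger distance is dominated by the Kullback–Leibler
divergence: `(√a - √ρ_I)² ≤ ρ_I klFun (a / ρ_I)`. With `a = (√ρ_I ± t)²` each tail of
`√(n_I / n) - √ρ_I` is at most `exp (-n t²)`. -/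

open Real InformationTheory Filter Topology

lemma sq_sqrt_sub_one_le_klFun {x : ℝ} (hx : 0 ≤ x) : (√x - 1) ^ 2 ≤ klFun x := by
  obtain ⟨y, hy, rfl⟩ : ∃ y, 0 ≤ y ∧ y ^ 2 = x := ⟨√x, sqrt_nonneg x, sq_sqrt hx⟩
  have hgap : klFun (y ^ 2) - (y - 1) ^ 2 = 2 * y * klFun y := by
    simp only [klFun, log_pow]
    push_cast
    ring
  rw [sqrt_sq hy]
  nlinarith [mul_nonneg (mul_nonneg zero_le_two hy) (klFun_nonneg hy)]

lemma sq_sqrt_sub_sqrt_le_mul_klFun {a p : ℝ} (ha : 0 ≤ a) (hp : 0 < p) :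
    (√a - √p) ^ 2 ≤ p * klFun (a / p) := by
  have hsp : 0 < √p := sqrt_pos.mpr hp
  calc (√a - √p) ^ 2 = p * (√(a / p) - 1) ^ 2 := by
        rw [sqrt_div' a hp.le, div_sub_one hsp.ne', div_pow, sq_sqrt hp.le,
          mul_div_cancel₀ _ hp.ne']
    _ ≤ p * klFun (a / p) := by gcongr; exact sq_sqrt_sub_one_le_klFun (div_nonneg ha hp.le)

/-- The Chernoff exponent at the optimal parameter `t = log (a / p)`. -/
lemma neg_log_div_mul_add_eq_neg_klFun {a p : ℝ} (ha : 0 < a) (hp : 0 < p) (n : ℝ) :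
    -log (a / p) * (n * a) + n * (p * (exp (log (a / p)) - 1)) = -(n * (p * klFun (a / p))) := by
  rw [exp_log (div_pos ha hp), klFun]
  field_simp
  ring

lemma Set.ncard_setOf_mem_eq_sum_indicator {ι α R : Type*} [Fintype ι] [AddCommMonoidWithOne R]
    (A : ι → Set α) (x : α) : ({i | x ∈ A i}.ncard : R) = ∑ i, (A i).indicator 1 x := by
  rw [Set.ncard_eq_toFinset_card', Set.toFinset_ofPred, Finset.natCast_card_filter]
  simp only [Set.indicator_apply, Pi.one_apply]

lemma exp_mul_indicator_one {α : Type*} (A : Set α) (t : ℝ) (x : α) :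
    exp (t * A.indicator 1 x) = 1 + A.indicator (fun _ => exp t - 1) x := by
  by_cases h : x ∈ A <;> simp [h]

namespace ProbabilityTheory

variable {Ω : Type*} [MeasurableSpace Ω] {P : Measure Ω} [IsProbabilityMeasure P]

lemma integrable_exp_mul_indicator_one {A : Set Ω} (hA : MeasurableSet A) (t : ℝ) :
    Integrable (fun ω => exp (t * A.indicator 1 ω)) P := by
  simp only [exp_mul_indicator_one]
  exact (integrable_const 1).add ((integrable_const _).indicator hA)

lemma mgf_indicator_one {A : Set Ω} (hA : MeasurableSet A) (t : ℝ) :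
    mgf (A.indicator 1) P t = 1 + P.real A * (exp t - 1) := by
  simp only [mgf, exp_mul_indicator_one]
  rw [integral_add (integrable_const 1) ((integrable_const _).indicator hA), integral_const,
    integral_indicator_const _ hA]
  simp

variable {ι : Type*} [Fintype ι] {A : ι → Set Ω} {p : ℝ} (hA : ∀ i, MeasurableSet (A i))
  (hind : iIndepFun (fun i => (A i).indicator (1 : Ω → ℝ)) P)
include hA hind

lemma integrable_exp_mul_sum_indicator_one (t : ℝ) :
    Integrable (fun ω => exp (t * (∑ i, (A i).indicator 1) ω)) P :=
  hind.integrable_exp_mul_sum (fun i => measurable_one.indicator (hA i))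
    fun i _ => integrable_exp_mul_indicator_one (hA i) t

variable (hp : ∀ i, P.real (A i) = p)
include hp

lemma mgf_sum_indicator_one_le (t : ℝ) :
    mgf (∑ i, (A i).indicator 1) P t ≤ exp (Fintype.card ι * (p * (exp t - 1))) := by
  rw [hind.mgf_sum (fun i => measurable_one.indicator (hA i))]
  calc ∏ i, mgf ((A i).indicator 1) P t ≤ ∏ _i : ι, exp (p * (exp t - 1)) := by
        refine Finset.prod_le_prod (fun i _ => mgf_nonneg) fun i _ => ?_
        rw [mgf_indicator_one (hA i), hp i]
        linarith [add_one_le_exp (p * (exp t - 1))]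
    _ = exp (Fintype.card ι * (p * (exp t - 1))) := by
        rw [Finset.prod_const, ← exp_nat_mul, Finset.card_univ]

lemma measureReal_sum_indicator_ge_le {t : ℝ} (ht : 0 ≤ t) (ε : ℝ) :
    P.real {ω | ε ≤ ∑ i, (A i).indicator 1 ω} ≤
      exp (-t * ε + Fintype.card ι * (p * (exp t - 1))) := by
  have hchernoff := measure_ge_le_exp_mul_mgf ε ht (integrable_exp_mul_sum_indicator_one hA hind t)
  simp only [Finset.sum_apply] at hchernoff
  rw [exp_add]
  exact hchernoff.trans (by gcongr; exact mgf_sum_indicator_one_le hA hind hp t)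

lemma measureReal_sum_indicator_le_le {t : ℝ} (ht : t ≤ 0) (ε : ℝ) :
    P.real {ω | ∑ i, (A i).indicator 1 ω ≤ ε} ≤
      exp (-t * ε + Fintype.card ι * (p * (exp t - 1))) := by
  have hchernoff := measure_le_le_exp_mul_mgf ε ht (integrable_exp_mul_sum_indicator_one hA hind t)
  simp only [Finset.sum_apply] at hchernoff
  rw [exp_add]
  exact hchernoff.trans (by gcongr; exact mgf_sum_indicator_one_le hA hind hp t)

theorem measureReal_sum_indicator_ge_le_klFun (hp0 : 0 < p) {a : ℝ} (hpa : p ≤ a) :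
    P.real {ω | Fintype.card ι * a ≤ ∑ i, (A i).indicator 1 ω} ≤
      exp (-(Fintype.card ι * (p * klFun (a / p)))) := by
  rw [← neg_log_div_mul_add_eq_neg_klFun (hp0.trans_le hpa) hp0]
  exact measureReal_sum_indicator_ge_le hA hind hp (log_nonneg ((one_le_div hp0).mpr hpa)) _

theorem measureReal_sum_indicator_le_le_klFun (hp0 : 0 < p) {a : ℝ} (ha : 0 ≤ a) (hap : a ≤ p) :
    P.real {ω | ∑ i, (A i).indicator 1 ω ≤ Fintype.card ι * a} ≤
      exp (-(Fintype.card ι * (p * klFun (a / p)))) := by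
  rcases ha.eq_or_lt with rfl | ha
  · -- the optimal `t = log (a / p)` is `-∞`: pass to the limit `t → -∞`
    simp only [mul_zero, zero_div, klFun_zero, mul_one]
    have hlim : Tendsto (fun t => exp (Fintype.card ι * (p * (exp t - 1)))) atBot
        (𝓝 (exp (Fintype.card ι * (p * (0 - 1))))) :=
      (((tendsto_exp_atBot.sub_const 1).const_mul p).const_mul _).rexp
    have hbound : ∀ t ≤ 0, P.real {ω | ∑ i, (A i).indicator (1 : Ω → ℝ) ω ≤ 0} ≤
        exp (Fintype.card ι * (p * (exp t - 1))) := fun t ht => by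
      simpa only [mul_zero, neg_zero, zero_add] using
        measureReal_sum_indicator_le_le hA hind hp ht 0
    exact (ge_of_tendsto hlim ((eventually_le_atBot 0).mono hbound)).trans_eq (by ring_nf)
  · rw [← neg_log_div_mul_add_eq_neg_klFun ha hp0]
    exact measureReal_sum_indicator_le_le hA hind hp (log_nonpos (by positivity)
      ((div_le_one hp0).mpr hap)) _

theorem measureReal_sqrt_sum_indicator_ge_le (hp0 : 0 < p) {t : ℝ} (ht : 0 ≤ t) :
    P.real {ω | √p + t ≤ √((∑ i, (A i).indicator 1 ω) / Fintype.card ι)} ≤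
      exp (-(Fintype.card ι * t ^ 2)) := by
  rcases (Fintype.card ι).eq_zero_or_pos with hn | hn
  · simp [hn, measureReal_le_one]
  have hsp : 0 < √p := sqrt_pos.mpr hp0
  have hpa : p ≤ (√p + t) ^ 2 := by
    rw [← sq_sqrt hp0.le, sqrt_sq hsp.le]
    gcongr
    linarith
  have hevent : {ω | √p + t ≤ √((∑ i, (A i).indicator 1 ω) / Fintype.card ι)} ⊆
      {ω | Fintype.card ι * (√p + t) ^ 2 ≤ ∑ i, (A i).indicator (1 : Ω → ℝ) ω} := fun ω hω => by
    rwa [Set.mem_ofPred_eq, le_sqrt' (by positivity), le_div_iff₀' (by positivity)] at hω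
  refine (measureReal_mono hevent).trans
    ((measureReal_sum_indicator_ge_le_klFun hA hind hp hp0 hpa).trans ?_)
  have hkl := sq_sqrt_sub_sqrt_le_mul_klFun (sq_nonneg (√p + t)) hp0
  rw [sqrt_sq (by positivity), add_sub_cancel_left] at hkl
  gcongr

theorem measureReal_sqrt_sum_indicator_le_le (hp0 : 0 < p) {t : ℝ} (ht : 0 ≤ t) :
    P.real {ω | √((∑ i, (A i).indicator 1 ω) / Fintype.card ι) ≤ √p - t} ≤
      exp (-(Fintype.card ι * t ^ 2)) := by
  rcases (Fintype.card ι).eq_zero_or_pos with hn | hn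
  · simp [hn, measureReal_le_one]
  rcases lt_or_ge (√p) t with hpt | htp
  · have hempty : {ω | √((∑ i, (A i).indicator 1 ω) / Fintype.card ι) ≤ √p - t} = ∅ :=
      Set.eq_empty_of_forall_notMem fun ω hω =>
        (sqrt_nonneg _).not_gt (hω.trans_lt (sub_neg.mpr hpt))
    rw [hempty, measureReal_empty]
    positivity
  have hap : (√p - t) ^ 2 ≤ p := by
    rw [← sq_sqrt hp0.le, sqrt_sq (sqrt_nonneg p)]
    gcongr
    linarith
  have hevent : {ω | √((∑ i, (A i).indicator 1 ω) / Fintype.card ι) ≤ √p - t} ⊆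
      {ω | ∑ i, (A i).indicator (1 : Ω → ℝ) ω ≤ Fintype.card ι * (√p - t) ^ 2} := fun ω hω => by
    rwa [Set.mem_ofPred_eq, sqrt_le_left (by linarith), div_le_iff₀' (by positivity)] at hω
  refine (measureReal_mono hevent).trans
    ((measureReal_sum_indicator_le_le_klFun hA hind hp hp0 (sq_nonneg _) hap).trans ?_)
  have hkl := sq_sqrt_sub_sqrt_le_mul_klFun (sq_nonneg (√p - t)) hp0
  rw [sqrt_sq (by linarith), sub_sub_cancel_left, neg_sq] at hkl
  gcongr

end ProbabilityTheory

theorem stmt_12 {D : ℕ} (I : Set (Euc D)) (hI : MeasurableSet I)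
    (ρ : Measure (Euc D)) [IsProbabilityMeasure ρ] (hρI : ρ I ≠ 0)
    {Ω : Type} [MeasurableSpace Ω] (P : Measure Ω) [IsProbabilityMeasure P]
    {n : ℕ} (Xs : Fin n → Ω → Euc D) (hXmeas : ∀ i, Measurable (Xs i))
    (hindep : iIndepFun Xs P)
    (hlaw : ∀ i, Measure.map (Xs i) P = ρ)
    (t : ℝ) (ht : 0 < t) :
    P {ω | t ≤ |Real.sqrt (({i | Xs i ω ∈ I}.ncard : ℝ) / (n : ℝ)) -
        Real.sqrt ((ρ I).toReal)|} ≤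
      ENNReal.ofReal (2 * Real.exp (-((n : ℝ) * t ^ 2) / 2)) := by
  set p := (ρ I).toReal
  have hA : ∀ i, MeasurableSet (Xs i ⁻¹' I) := fun i => hXmeas i hI
  have hind : iIndepFun (fun i => (Xs i ⁻¹' I).indicator (1 : Ω → ℝ)) P :=
    hindep.comp (fun _ => I.indicator 1) fun _ => measurable_one.indicator hI
  have hp : ∀ i, P.real (Xs i ⁻¹' I) = p := fun i => by
    rw [← map_measureReal_apply (hXmeas i) hI, hlaw i, measureReal_def]
  have hp0 : 0 < p := ENNReal.toReal_pos hρI (measure_ne_top ρ I)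
  have hupper := measureReal_sqrt_sum_indicator_ge_le hA hind hp hp0 ht.le
  have hlower := measureReal_sqrt_sum_indicator_le_le hA hind hp hp0 ht.le
  simp only [Fintype.card_fin, ← Set.ncard_setOf_mem_eq_sum_indicator, Set.mem_preimage]
    at hupper hlower
  have hevent : {ω | t ≤ |√(({i | Xs i ω ∈ I}.ncard : ℝ) / n) - √p|} ⊆
      {ω | √p + t ≤ √(({i | Xs i ω ∈ I}.ncard : ℝ) / n)} ∪
        {ω | √(({i | Xs i ω ∈ I}.ncard : ℝ) / n) ≤ √p - t} := fun ω (hω : t ≤ |_|) => by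
    rcases le_abs'.mp hω with h | h
    · exact Or.inr (by simp only [Set.mem_ofPred_eq]; linarith)
    · exact Or.inl (by simp only [Set.mem_ofPred_eq]; linarith)
  rw [← ofReal_measureReal]
  refine ENNReal.ofReal_le_ofReal ?_
  calc _ ≤ exp (-(n * t ^ 2)) + exp (-(n * t ^ 2)) :=
        (measureReal_mono hevent).trans
          ((measureReal_union_le _ _).trans (add_le_add hupper hlower))
    _ ≤ 2 * exp (-(n * t ^ 2) / 2) := by
        rw [← two_mul]
        gcongr
        linarith [mul_nonneg n.cast_nonneg (sq_nonneg t)]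

end
end

section
/- Let ξ_1, …, ξ_n be independent zero-mean random variables taking values in a real separable Hilbert space H, with ‖ξ_i‖ ≤ M almost surely for all i, for some constant M > 0. Then for every t > 0, P( ‖(1/n) Σ_{i=1}^n ξ_i‖ ≥ t ) ≤ 2 exp( −n t² / (4M²) ). -/
open MeasureTheory Set ProbabilityTheory
open scoped BigOperators ENNReal NNReal

attribute [local instance] Classical.propDecidable

noncomputable section

/-!
Pinelis' argument. Since `r ↦ cosh (l √r)` is convex, for `‖x‖ ≤ M` the quantity
`cosh (l ‖y + x‖)` is bounded by a chord that is affine in `⟪y, x⟫`. Averaging over a centred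
increment independent of `y` kills the affine part, so `E cosh (l ‖ξ₁ + ⋯ + ξₖ‖)` grows by at
most a factor `cosh (l M) ≤ exp (l² M² / 2)` per summand. Markov's inequality with
`exp (l s) ≤ 2 cosh (l s)` and `l = t / M²` then gives the bound even with `2 M²` in place
of `4 M²`.
-/

open scoped RealInnerProductSpace

namespace Real

lemma sinh_le_mul_cosh {x : ℝ} (hx : 0 ≤ x) : sinh x ≤ x * cosh x := by
  rcases hx.eq_or_lt with rfl | hx
  · simp
  obtain ⟨c, hc, hslope⟩ := exists_hasDerivAt_eq_slope sinh cosh hx continuous_sinh.continuousOn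
    fun y _ => hasDerivAt_sinh y
  rw [sinh_zero, sub_zero, sub_zero, eq_div_iff hx.ne'] at hslope
  have hcx : cosh c ≤ cosh x := by
    rw [cosh_le_cosh, abs_of_pos hc.1, abs_of_pos hx]
    exact hc.2.le
  rw [← hslope, mul_comm]
  gcongr

lemma convexOn_cosh_mul_sqrt {l : ℝ} (hl : 0 ≤ l) :
    ConvexOn ℝ (Ici 0) fun r => cosh (l * √r) := by
  refine convexOn_of_hasDerivWithinAt2_nonneg (convex_Ici 0)
    (f' := fun r => l / 2 * (sinh (l * √r) * (√r)⁻¹))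
    (f'' := fun r => l / (4 * r * √r) * (l * √r * cosh (l * √r) - sinh (l * √r)))
    (by fun_prop) ?_ ?_ ?_ <;> intro r hr <;> rw [interior_Ici, mem_Ioi] at hr
  · refine (((hasDerivAt_sqrt hr.ne').const_mul l).cosh.congr_deriv ?_).hasDerivWithinAt
    field_simp
  · have hsqrt : 0 < √r := sqrt_pos.2 hr
    refine ((((((hasDerivAt_sqrt hr.ne').const_mul l).sinh).mul
      ((hasDerivAt_sqrt hr.ne').inv hsqrt.ne')).const_mul (l / 2)).congr_deriv ?_).hasDerivWithinAt
    obtain ⟨a, ha, rfl⟩ : ∃ a, 0 < a ∧ r = a ^ 2 := ⟨√r, hsqrt, (sq_sqrt hr.le).symm⟩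
    simp only [Pi.inv_apply, sqrt_sq ha.le]
    field_simp
    ring
  · have hsqrt : 0 < √r := sqrt_pos.2 hr
    have := sinh_le_mul_cosh (mul_nonneg hl hsqrt.le)
    exact mul_nonneg (by positivity) (by linarith)

end Real

open Real

section Normed

variable {E : Type*} [NormedAddCommGroup E] {Ω : Type*} [MeasurableSpace Ω] {P : Measure Ω}

lemma integrable_cosh_mul_norm [IsFiniteMeasure P] {Z : Ω → E} (hZ : AEStronglyMeasurable Z P)
    {C l : ℝ} (hl : 0 ≤ l) (hC : ∀ᵐ ω ∂P, ‖Z ω‖ ≤ C) :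
    Integrable (fun ω => cosh (l * ‖Z ω‖)) P := by
  refine .of_bound (by fun_prop) (cosh (l * C)) (hC.mono fun ω hω => ?_)
  rw [norm_of_nonneg (cosh_pos _).le, cosh_le_cosh, abs_of_nonneg (by positivity)]
  exact (mul_le_mul_of_nonneg_left hω hl).trans (le_abs_self _)

lemma ae_norm_sum_le_card_mul {ι : Type*} {ξ : ι → Ω → E} {M : ℝ}
    (hbdd : ∀ i, ∀ᵐ ω ∂P, ‖ξ i ω‖ ≤ M) (s : Finset ι) :
    ∀ᵐ ω ∂P, ‖∑ i ∈ s, ξ i ω‖ ≤ s.card * M := by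
  filter_upwards [(ae_ball_iff s.countable_toSet).2 fun i _ => hbdd i] with ω hω
  exact (norm_sum_le _ _).trans (by simpa using Finset.sum_le_card_nsmul s _ M hω)

lemma measureReal_le_norm_le_exp_mul_integral_cosh [IsFiniteMeasure P] {Z : Ω → E} {l : ℝ}
    (hl : 0 ≤ l) (hint : Integrable (fun ω => cosh (l * ‖Z ω‖)) P) (s : ℝ) :
    P.real {ω | s ≤ ‖Z ω‖} ≤ 2 * exp (-(l * s)) * ∫ ω, cosh (l * ‖Z ω‖) ∂P := by
  have hsub : {ω | s ≤ ‖Z ω‖} ⊆ {ω | exp (l * s) / 2 ≤ cosh (l * ‖Z ω‖)} := fun ω hω => by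
    have : exp (l * s) ≤ exp (l * ‖Z ω‖) := exp_le_exp.2 (mul_le_mul_of_nonneg_left hω hl)
    show exp (l * s) / 2 ≤ cosh (l * ‖Z ω‖)
    rw [cosh_eq]
    linarith [exp_pos (-(l * ‖Z ω‖))]
  calc P.real {ω | s ≤ ‖Z ω‖}
      ≤ P.real {ω | exp (l * s) / 2 ≤ cosh (l * ‖Z ω‖)} := measureReal_mono hsub
    _ ≤ (∫ ω, cosh (l * ‖Z ω‖) ∂P) / (exp (l * s) / 2) := by
        rw [le_div_iff₀ (by positivity), mul_comm]
        exact mul_meas_ge_le_integral_of_nonneg (ae_of_all _ fun ω => (cosh_pos _).le) hint _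
    _ = 2 * exp (-(l * s)) * ∫ ω, cosh (l * ‖Z ω‖) ∂P := by
        rw [exp_neg]
        field_simp

end Normed

lemma ProbabilityTheory.IndepFun.integral_comp_eq_integral_integral {Ω E F G : Type*}
    [MeasurableSpace Ω] {P : Measure Ω} [IsFiniteMeasure P] [MeasurableSpace E]
    [MeasurableSpace F] [NormedAddCommGroup G] [NormedSpace ℝ G] {X : Ω → E} {Y : Ω → F}
    (hXY : IndepFun X Y P) (hX : AEMeasurable X P) (hY : AEMeasurable Y P) {g : E × F → G}
    (hg : AEStronglyMeasurable g ((P.map X).prod (P.map Y)))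
    (hint : Integrable (fun ω => g (X ω, Y ω)) P) :
    ∫ ω, g (X ω, Y ω) ∂P = ∫ x, ∫ y, g (x, y) ∂(P.map Y) ∂(P.map X) := by
  have hmap := (indepFun_iff_map_prod_eq_prod_map_map hX hY).1 hXY
  rw [← hmap] at hg
  have hint' : Integrable g (P.map fun ω => (X ω, Y ω)) :=
    (integrable_map_measure hg (hX.prodMk hY)).2 hint
  rw [← integral_prod g (hmap ▸ hint'), ← hmap, integral_map (hX.prodMk hY) hg]

section Hilbert

variable {H : Type*} [NormedAddCommGroup H] [InnerProductSpace ℝ H]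

/-- `‖y + x‖²` lies in `[(‖y‖ - M)², (‖y‖ + M)²]`, where the convex function `r ↦ cosh (l √r)`
is below its chord; the chord is affine in `⟪y, x⟫`. -/
lemma cosh_mul_norm_add_le_s18 {M l : ℝ} (hM : 0 < M) (hl : 0 ≤ l) (y : H) {x : H}
    (hx : ‖x‖ ≤ M) :
    cosh (l * ‖y + x‖) ≤ cosh (l * ‖y‖) * cosh (l * M) +
      sinh (l * ‖y‖) * sinh (l * M) / (‖y‖ * M) * ⟪y, x⟫ := by
  rcases eq_or_ne y 0 with rfl | hy
  · simpa [cosh_le_cosh, abs_of_nonneg hl, abs_of_nonneg hM.le]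
      using mul_le_mul_of_nonneg_left hx hl
  set a := ‖y‖
  set u := ⟪y, x⟫
  have ha : 0 < a := norm_pos_iff.2 hy
  have hu : |u| ≤ a * M := (abs_real_inner_le_norm y x).trans (by gcongr)
  set θ := (a * M - u) / (2 * (a * M))
  have hθ₀ : 0 ≤ θ := div_nonneg (by linarith [le_abs_self u]) (by positivity)
  have hθ₁ : 0 ≤ 1 - θ := by
    rw [sub_nonneg, div_le_one (by positivity)]
    linarith [neg_abs_le u]
  have hθu : a * M * (1 - 2 * θ) = u := by
    simp only [θ]
    field_simp
    ring
  have hcomb : θ * (a - M) ^ 2 + (1 - θ) * (a + M) ^ 2 = a ^ 2 + 2 * u + M ^ 2 := by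
    linear_combination 2 * hθu
  have hsq : ‖y + x‖ ^ 2 ≤ a ^ 2 + 2 * u + M ^ 2 := by
    rw [norm_add_sq_real]
    gcongr
  have hsqrt : ∀ b, cosh (l * √(b ^ 2)) = cosh (l * b) := fun b => by
    rw [sqrt_sq_eq_abs, ← cosh_abs (l * b), abs_mul, abs_of_nonneg hl]
  calc cosh (l * ‖y + x‖) = cosh (l * √(‖y + x‖ ^ 2)) := (hsqrt _).symm
    _ ≤ cosh (l * √(θ * (a - M) ^ 2 + (1 - θ) * (a + M) ^ 2)) := by
        rw [cosh_le_cosh, abs_of_nonneg (by positivity), abs_of_nonneg (by positivity), hcomb]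
        gcongr
    _ ≤ θ * cosh (l * √((a - M) ^ 2)) + (1 - θ) * cosh (l * √((a + M) ^ 2)) :=
        (convexOn_cosh_mul_sqrt hl).2 (sq_nonneg (a - M)) (sq_nonneg (a + M)) hθ₀ hθ₁ (by ring)
    _ = cosh (l * a) * cosh (l * M) + sinh (l * a) * sinh (l * M) / (a * M) * u := by
        rw [hsqrt, hsqrt, mul_sub, mul_add, cosh_sub, cosh_add]
        field_simp
        linear_combination sinh (l * a) * sinh (l * M) * hθu

variable [CompleteSpace H] [MeasurableSpace H] [BorelSpace H] [SecondCountableTopology H]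

lemma integral_cosh_mul_norm_add_le (ν : Measure H) [IsProbabilityMeasure ν] {M l : ℝ}
    (hM : 0 < M) (hl : 0 ≤ l) (hbdd : ∀ᵐ x ∂ν, ‖x‖ ≤ M) (hmean : ∫ x, x ∂ν = 0) (y : H) :
    ∫ x, cosh (l * ‖y + x‖) ∂ν ≤ cosh (l * ‖y‖) * cosh (l * M) := by
  set K := sinh (l * ‖y‖) * sinh (l * M) / (‖y‖ * M)
  have hint_id : Integrable (fun x : H => x) ν := .of_bound aestronglyMeasurable_id M hbdd
  have hint_inner : Integrable (fun x => K * ⟪y, x⟫) ν :=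
    ((innerSL ℝ y).integrable_comp hint_id).const_mul K
  calc ∫ x, cosh (l * ‖y + x‖) ∂ν
      ≤ ∫ x, (cosh (l * ‖y‖) * cosh (l * M) + K * ⟪y, x⟫) ∂ν :=
        integral_mono_of_nonneg (ae_of_all _ fun x => (cosh_pos _).le)
          ((integrable_const _).add hint_inner)
          (hbdd.mono fun x hx => cosh_mul_norm_add_le_s18 hM hl y hx)
    _ = cosh (l * ‖y‖) * cosh (l * M) := by
        rw [integral_add (integrable_const _) hint_inner, integral_const_mul K,
          integral_inner hint_id, hmean, inner_zero_right]
        simp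

variable {Ω : Type*} [MeasurableSpace Ω] {P : Measure Ω} [IsProbabilityMeasure P]

lemma ProbabilityTheory.IndepFun.integral_cosh_mul_norm_add_le {X Y : Ω → H}
    (hXY : IndepFun X Y P) (hX : Measurable X) (hY : Measurable Y) {C M l : ℝ} (hM : 0 < M)
    (hl : 0 ≤ l) (hXC : ∀ᵐ ω ∂P, ‖X ω‖ ≤ C) (hYM : ∀ᵐ ω ∂P, ‖Y ω‖ ≤ M)
    (hmean : ∫ ω, Y ω ∂P = 0) :
    ∫ ω, cosh (l * ‖X ω + Y ω‖) ∂P ≤ cosh (l * M) * ∫ ω, cosh (l * ‖X ω‖) ∂P := by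
  have hbdd_map : ∀ {Z : Ω → H} {B : ℝ}, Measurable Z → (∀ᵐ ω ∂P, ‖Z ω‖ ≤ B) →
      ∀ᵐ z ∂P.map Z, ‖z‖ ≤ B := fun hZ hB =>
    (ae_map_iff hZ.aemeasurable (measurableSet_le measurable_norm measurable_const)).2 hB
  have := Measure.isProbabilityMeasure_map (μ := P) hY.aemeasurable
  have hmean_map : ∫ y, y ∂P.map Y = 0 :=
    (integral_map hY.aemeasurable aestronglyMeasurable_id).trans hmean
  have hXY_bdd : ∀ᵐ ω ∂P, ‖X ω + Y ω‖ ≤ C + M := by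
    filter_upwards [hXC, hYM] with ω hX hY
    exact (norm_add_le _ _).trans (add_le_add hX hY)
  calc ∫ ω, cosh (l * ‖X ω + Y ω‖) ∂P
      = ∫ x, ∫ y, cosh (l * ‖x + y‖) ∂P.map Y ∂P.map X :=
        hXY.integral_comp_eq_integral_integral (g := fun p => cosh (l * ‖p.1 + p.2‖))
          hX.aemeasurable hY.aemeasurable (by fun_prop)
          (integrable_cosh_mul_norm (by fun_prop) hl hXY_bdd)
    _ ≤ ∫ x, cosh (l * ‖x‖) * cosh (l * M) ∂P.map X :=
        integral_mono_of_nonneg (ae_of_all _ fun x => integral_nonneg fun y => (cosh_pos _).le)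
          ((integrable_cosh_mul_norm aestronglyMeasurable_id hl (hbdd_map hX hXC)).mul_const _)
          (ae_of_all _ fun x => _root_.integral_cosh_mul_norm_add_le _ hM hl (hbdd_map hY hYM)
            hmean_map x)
    _ = cosh (l * M) * ∫ ω, cosh (l * ‖X ω‖) ∂P := by
        rw [integral_mul_const, integral_map hX.aemeasurable (by fun_prop), mul_comm]

lemma integral_cosh_mul_norm_sum_le {ι : Type*} {ξ : ι → Ω → H} (hmeas : ∀ i, Measurable (ξ i))
    (hindep : iIndepFun ξ P) (hmean : ∀ i, ∫ ω, ξ i ω ∂P = 0) {M l : ℝ} (hM : 0 < M)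
    (hl : 0 ≤ l) (hbdd : ∀ i, ∀ᵐ ω ∂P, ‖ξ i ω‖ ≤ M) (s : Finset ι) :
    ∫ ω, cosh (l * ‖∑ i ∈ s, ξ i ω‖) ∂P ≤ cosh (l * M) ^ s.card := by
  classical
  induction s using Finset.induction_on with
  | empty => simp
  | insert i s hi ih =>
    have hind : IndepFun (fun ω => ∑ j ∈ s, ξ j ω) (ξ i) P := by
      simpa only [← Finset.sum_fn] using hindep.indepFun_finsetSum_of_notMem hmeas hi
    simp_rw [Finset.sum_insert hi, add_comm (ξ i _)]
    calc _ ≤ cosh (l * M) * ∫ ω, cosh (l * ‖∑ j ∈ s, ξ j ω‖) ∂P :=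
          hind.integral_cosh_mul_norm_add_le (s.measurable_fun_sum fun j _ => hmeas j) (hmeas i)
            hM hl (ae_norm_sum_le_card_mul hbdd s) (hbdd i) (hmean i)
      _ ≤ cosh (l * M) * cosh (l * M) ^ s.card := by gcongr
      _ = cosh (l * M) ^ (insert i s).card := by rw [Finset.card_insert_of_notMem hi, pow_succ']

lemma measureReal_le_norm_sum_le {ι : Type*} {ξ : ι → Ω → H} (hmeas : ∀ i, Measurable (ξ i))
    (hindep : iIndepFun ξ P) (hmean : ∀ i, ∫ ω, ξ i ω ∂P = 0) {M l : ℝ} (hM : 0 < M)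
    (hl : 0 ≤ l) (hbdd : ∀ i, ∀ᵐ ω ∂P, ‖ξ i ω‖ ≤ M) (s : Finset ι) (r : ℝ) :
    P.real {ω | r ≤ ‖∑ i ∈ s, ξ i ω‖} ≤ 2 * exp (-(l * r) + s.card * (l * M) ^ 2 / 2) := by
  have hint : Integrable (fun ω => cosh (l * ‖∑ i ∈ s, ξ i ω‖)) P :=
    integrable_cosh_mul_norm (by fun_prop) hl (ae_norm_sum_le_card_mul hbdd s)
  calc P.real {ω | r ≤ ‖∑ i ∈ s, ξ i ω‖}
      ≤ 2 * exp (-(l * r)) * ∫ ω, cosh (l * ‖∑ i ∈ s, ξ i ω‖) ∂P :=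
        measureReal_le_norm_le_exp_mul_integral_cosh hl hint r
    _ ≤ 2 * exp (-(l * r)) * exp ((l * M) ^ 2 / 2) ^ s.card := by
        grw [integral_cosh_mul_norm_sum_le hmeas hindep hmean hM hl hbdd s, cosh_le_exp_half_sq]
    _ = 2 * exp (-(l * r) + s.card * (l * M) ^ 2 / 2) := by
        rw [← exp_nat_mul, mul_assoc, ← exp_add, mul_div_assoc]

end Hilbert

theorem stmt_18 {H : Type} [NormedAddCommGroup H] [InnerProductSpace ℝ H]
    [CompleteSpace H] [TopologicalSpace.SeparableSpace H]
    [MeasurableSpace H] [BorelSpace H]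
    {Ω : Type} [MeasurableSpace Ω] (P : Measure Ω) [IsProbabilityMeasure P]
    {n : ℕ} (ξ : Fin n → Ω → H) (hmeas : ∀ i, Measurable (ξ i))
    (hindep : iIndepFun ξ P)
    (hmean : ∀ i, (∫ ω, ξ i ω ∂P) = 0)
    (M : ℝ) (hM : 0 < M) (hbdd : ∀ i, ∀ᵐ ω ∂P, ‖ξ i ω‖ ≤ M)
    (t : ℝ) (ht : 0 < t) :
    P {ω | t ≤ ‖(n : ℝ)⁻¹ • ∑ i, ξ i ω‖} ≤
      ENNReal.ofReal (2 * Real.exp (-((n : ℝ) * t ^ 2) / (4 * M ^ 2))) := by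
  have := UniformSpace.secondCountable_of_separable H
  set l := t / M ^ 2
  have hl : 0 ≤ l := by positivity
  have hevent : {ω | t ≤ ‖(n : ℝ)⁻¹ • ∑ i, ξ i ω‖} ⊆ {ω | n * t ≤ ‖∑ i, ξ i ω‖} := by
    intro ω (hω : t ≤ ‖(n : ℝ)⁻¹ • ∑ i, ξ i ω‖)
    rcases n.eq_zero_or_pos with rfl | hn
    · simp only [CharP.cast_eq_zero, inv_zero, zero_smul, norm_zero] at hω
      linarith
    · rwa [norm_smul, norm_inv, RCLike.norm_natCast, le_inv_mul_iff₀ (by positivity)] at hω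
  have hexponent : -(l * (n * t)) + n * (l * M) ^ 2 / 2 ≤ -(n * t ^ 2) / (4 * M ^ 2) := by
    simp only [l]
    field_simp
    nlinarith [sq_nonneg t, n.cast_nonneg (α := ℝ)]
  rw [← ofReal_measureReal]
  gcongr
  calc P.real {ω | t ≤ ‖(n : ℝ)⁻¹ • ∑ i, ξ i ω‖}
      ≤ P.real {ω | n * t ≤ ‖∑ i, ξ i ω‖} := measureReal_mono hevent
    _ ≤ 2 * exp (-(l * (n * t)) + n * (l * M) ^ 2 / 2) := by
        simpa using measureReal_le_norm_sum_le hmeas hindep hmean hM hl hbdd Finset.univ (n * t)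
    _ ≤ 2 * exp (-(n * t ^ 2) / (4 * M ^ 2)) := by gcongr
end
end
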